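/- For each fixed ζ ∈ 𝔻, ∫_𝔻 |G(z,ζ)| dA(z) ≤ 3/4 and ∫_𝔻 |G_z(z,ζ)| dA(z) ≤ 5/2; in particular both integrals are finite. -/

import Mathlib

open MeasureTheory Complex Metric

/-- The Wirtinger derivative `∂p/∂z = (p_x - i p_y)/2` of a function `p : ℂ → ℂ`. -/
noncomputable def wderiv (p : ℂ → ℂ) (z : ℂ) : ℂ :=
  (fderiv ℝ p z 1 - Complex.I * fderiv ℝ p z Complex.I) / 2

/-- The Wirtinger derivative `∂p/∂z̄ = (p_x + i p_y)/2` of a function `p : ℂ → ℂ`. -/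
noncomputable def wderivBar (p : ℂ → ℂ) (z : ℂ) : ℂ :=
  (fderiv ℝ p z 1 + Complex.I * fderiv ℝ p z Complex.I) / 2

/-- The normalized area measure `dA = (1/π) dx dy` on the unit disk. -/
noncomputable def dA : Measure ℂ :=
  ENNReal.ofReal (1 / Real.pi) • volume.restrict (ball (0 : ℂ) 1)

/-- The biharmonic Green function of the unit disk. -/
noncomputable def Gker (z ζ : ℂ) : ℝ :=
  ‖z - ζ‖ ^ 2 * Real.log (‖(1 - (starRingEnd ℂ) ζ * z) / (z - ζ)‖ ^ 2)
    - (1 - ‖z‖ ^ 2) * (1 - ‖ζ‖ ^ 2)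

/-- The Wirtinger derivative of the biharmonic Green function in its first variable. -/
noncomputable def Gz (z ζ : ℂ) : ℂ :=
  ((starRingEnd ℂ) z - (starRingEnd ℂ) ζ) *
      ((Real.log (‖(z - ζ) / (1 - (starRingEnd ℂ) ζ * z)‖ ^ 2) : ℝ) : ℂ)
    + ((starRingEnd ℂ) z - (starRingEnd ℂ) ζ) * ((1 - ‖ζ‖ ^ 2 : ℝ) : ℂ) /
        (1 - (starRingEnd ℂ) ζ * z)
    - (starRingEnd ℂ) z * ((1 - ‖ζ‖ ^ 2 : ℝ) : ℂ)

/-- The kernel `H₀(z) = (1/2)(1-|z|²)²/|1-z|²`. -/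
noncomputable def H0 (z : ℂ) : ℝ :=
  (1 - ‖z‖ ^ 2) ^ 2 / (2 * ‖1 - z‖ ^ 2)

/-- The biharmonic Poisson kernel `F₀(z) = H₀(z) + (1/2)(1-|z|²)³/|1-z|⁴`. -/
noncomputable def F0 (z : ℂ) : ℝ :=
  H0 z + (1 - ‖z‖ ^ 2) ^ 3 / (2 * ‖1 - z‖ ^ 4)

/-- `F₀[f](z) = (1/(2π)) ∫₀^{2π} F₀(z e^{-iθ}) f(e^{iθ}) dθ`. -/
noncomputable def F0int (f : ℂ → ℂ) (z : ℂ) : ℂ :=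
  (1 / (2 * (Real.pi : ℂ))) * ∫ θ in (0:ℝ)..(2 * Real.pi),
    ((F0 (z * Complex.exp (-(θ : ℂ) * Complex.I)) : ℝ) : ℂ) * f (Complex.exp ((θ : ℂ) * Complex.I))

/-- `H₀[h](z) = (1/(2π)) ∫₀^{2π} H₀(z e^{-iθ}) h(e^{iθ}) dθ`. -/
noncomputable def H0int (h : ℂ → ℂ) (z : ℂ) : ℂ :=
  (1 / (2 * (Real.pi : ℂ))) * ∫ θ in (0:ℝ)..(2 * Real.pi),
    ((H0 (z * Complex.exp (-(θ : ℂ) * Complex.I)) : ℝ) : ℂ) * h (Complex.exp ((θ : ℂ) * Complex.I))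

/-- `G[g](z) = ∫_𝔻 G(z,ζ) g(ζ) dA(ζ)`. -/
noncomputable def Gint (g : ℂ → ℂ) (z : ℂ) : ℂ :=
  ∫ ζ, ((Gker z ζ : ℝ) : ℂ) * g ζ ∂dA

/-- The sup of `|g|` over a set `s`. -/
noncomputable def supAbsOn (g : ℂ → ℂ) (s : Set ℂ) : ℝ :=
  sSup ((fun z => ‖g z‖) '' s)

/-- The Laplacian `Δ = (1/4)(∂²/∂x² + ∂²/∂y²)`. -/
noncomputable def lap (w : ℂ → ℂ) (z : ℂ) : ℂ :=
  (fderiv ℝ (fun x => fderiv ℝ w x 1) z 1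
    + fderiv ℝ (fun x => fderiv ℝ w x Complex.I) z Complex.I) / 4

/-! With `a = |z - ζ|` and `b = |1 - ζ̄ z|` one has `b² - a² = (1 - |z|²)(1 - |ζ|²)`, so `a ≤ b`,
and `b ≥ 1 - |ζ|`. The inequality `x ≤ sinh x`, i.e. `2 log t ≤ t - 1/t` for `t = b/a ≥ 1`, gives
`a b |log (a²/b²)| ≤ b² - a²`, which controls the logarithmic terms: `|G(z,ζ)| ≤ 1 - |z|²` and
`|G_z(z,ζ)| ≤ (1 + |ζ|)(1 - |z|²) + (1 - |ζ|²)(1 + |z|)`. Integrating these radial majorants in polar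
coordinates gives `1/2 ≤ 3/4` and `(1 + |ζ|)/2 + 5(1 - |ζ|²)/3 ≤ 5/2`. -/

open Set ComplexConjugate

theorem two_mul_log_le_sub_inv {t : ℝ} (ht : 1 ≤ t) : 2 * Real.log t ≤ t - t⁻¹ := by
  have := Real.self_le_sinh_iff.2 (Real.log_nonneg ht)
  rw [Real.sinh_log (by linarith)] at this
  linarith

theorem mul_mul_abs_log_div_sq_le {a b : ℝ} (ha : 0 ≤ a) (hab : a ≤ b) :
    a * b * |Real.log ((a / b) ^ 2)| ≤ b ^ 2 - a ^ 2 := by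
  rcases ha.eq_or_lt with rfl | ha
  · simp [sq_nonneg]
  have hb : 0 < b := ha.trans_le hab
  have hba : 1 ≤ b / a := (one_le_div ha).2 hab
  rw [← inv_div, inv_pow, Real.log_inv, abs_neg, Real.log_pow, Nat.cast_ofNat,
    abs_of_nonneg (mul_nonneg zero_le_two (Real.log_nonneg hba))]
  calc a * b * (2 * Real.log (b / a)) ≤ a * b * (b / a - (b / a)⁻¹) :=
        mul_le_mul_of_nonneg_left (two_mul_log_le_sub_inv hba) (by positivity)
    _ = b ^ 2 - a ^ 2 := by field_simp

theorem norm_one_sub_conj_mul_sq_sub_norm_sub_sq (z ζ : ℂ) :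
    ‖1 - conj ζ * z‖ ^ 2 - ‖z - ζ‖ ^ 2 = (1 - ‖z‖ ^ 2) * (1 - ‖ζ‖ ^ 2) := by
  simp only [Complex.sq_norm, Complex.normSq_apply, Complex.mul_re, Complex.mul_im,
    Complex.sub_re, Complex.sub_im, Complex.one_re, Complex.one_im, Complex.conj_re,
    Complex.conj_im]
  ring

theorem norm_sub_le_norm_one_sub_conj_mul {z ζ : ℂ} (hz : ‖z‖ ≤ 1) (hζ : ‖ζ‖ ≤ 1) :
    ‖z - ζ‖ ≤ ‖1 - conj ζ * z‖ := by
  have := norm_one_sub_conj_mul_sq_sub_norm_sub_sq z ζ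
  have : 0 ≤ (1 - ‖z‖ ^ 2) * (1 - ‖ζ‖ ^ 2) :=
    mul_nonneg (by nlinarith [norm_nonneg z]) (by nlinarith [norm_nonneg ζ])
  exact (pow_le_pow_iff_left₀ (norm_nonneg _) (norm_nonneg _) two_ne_zero).1 (by linarith)

theorem one_sub_norm_le_norm_one_sub_conj_mul {z : ℂ} (ζ : ℂ) (hz : ‖z‖ ≤ 1) :
    1 - ‖ζ‖ ≤ ‖1 - conj ζ * z‖ :=
  calc 1 - ‖ζ‖ ≤ ‖(1 : ℂ)‖ - ‖conj ζ * z‖ := by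
        simp only [norm_one, norm_mul, Complex.norm_conj]
        nlinarith [norm_nonneg ζ]
    _ ≤ ‖1 - conj ζ * z‖ := norm_sub_norm_le _ _

theorem log_norm_div_one_sub_conj_mul_sq_nonpos {z ζ : ℂ} (hz : ‖z‖ ≤ 1) (hζ : ‖ζ‖ ≤ 1) :
    Real.log (‖(z - ζ) / (1 - conj ζ * z)‖ ^ 2) ≤ 0 := by
  refine Real.log_nonpos (by positivity) (pow_le_one₀ (norm_nonneg _) ?_)
  rw [norm_div]
  exact div_le_one_of_le₀ (norm_sub_le_norm_one_sub_conj_mul hz hζ) (norm_nonneg _)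

theorem norm_sub_mul_mul_abs_log_le {z ζ : ℂ} (hz : ‖z‖ ≤ 1) (hζ : ‖ζ‖ ≤ 1) :
    ‖z - ζ‖ * ‖1 - conj ζ * z‖ * |Real.log (‖(z - ζ) / (1 - conj ζ * z)‖ ^ 2)|
      ≤ (1 - ‖z‖ ^ 2) * (1 - ‖ζ‖ ^ 2) := by
  rw [norm_div, ← norm_one_sub_conj_mul_sq_sub_norm_sub_sq]
  exact mul_mul_abs_log_div_sq_le (norm_nonneg _) (norm_sub_le_norm_one_sub_conj_mul hz hζ)

theorem abs_Gker_le {z ζ : ℂ} (hz : ‖z‖ ≤ 1) (hζ : ‖ζ‖ ≤ 1) : |Gker z ζ| ≤ 1 - ‖z‖ ^ 2 := by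
  set ℓ := Real.log (‖(z - ζ) / (1 - conj ζ * z)‖ ^ 2)
  have hG : Gker z ζ = ‖z - ζ‖ ^ 2 * |ℓ| - (1 - ‖z‖ ^ 2) * (1 - ‖ζ‖ ^ 2) := by
    rw [Gker, ← inv_div, norm_inv, inv_pow, Real.log_inv,
      abs_of_nonpos (log_norm_div_one_sub_conj_mul_sq_nonpos hz hζ)]
  have hℓ := norm_sub_mul_mul_abs_log_le hz hζ
  have hsq : ‖z - ζ‖ ^ 2 * |ℓ| ≤ ‖z - ζ‖ * ‖1 - conj ζ * z‖ * |ℓ| := by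
    rw [sq]; gcongr; exact norm_sub_le_norm_one_sub_conj_mul hz hζ
  have h1z : 0 ≤ 1 - ‖z‖ ^ 2 := by nlinarith [norm_nonneg z]
  have : 0 ≤ ‖z - ζ‖ ^ 2 * |ℓ| := by positivity
  rw [hG, abs_sub_le_iff]
  constructor <;> nlinarith [sq_nonneg ‖ζ‖]

def GzMajorant (r y : ℝ) : ℝ := (1 + r) * (1 - y ^ 2) + (1 - r ^ 2) * (1 + y)

theorem GzMajorant_nonneg {r y : ℝ} (hr : r ∈ Icc (-1 : ℝ) 1) (hy : y ∈ Icc (-1 : ℝ) 1) :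
    0 ≤ GzMajorant r y := by
  have : 0 ≤ 1 - r ^ 2 := by nlinarith [hr.1, hr.2]
  have : 0 ≤ 1 - y ^ 2 := by nlinarith [hy.1, hy.2]
  unfold GzMajorant
  nlinarith [hr.1, hy.1]

theorem norm_Gz_le {z ζ : ℂ} (hz : ‖z‖ ≤ 1) (hζ : ‖ζ‖ < 1) : ‖Gz z ζ‖ ≤ GzMajorant ‖ζ‖ ‖z‖ := by
  have hc : 0 ≤ 1 - ‖ζ‖ ^ 2 := by nlinarith [norm_nonneg ζ]
  have htri : ‖Gz z ζ‖ ≤ ‖z - ζ‖ * |Real.log (‖(z - ζ) / (1 - conj ζ * z)‖ ^ 2)|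
      + ‖z - ζ‖ * (1 - ‖ζ‖ ^ 2) / ‖1 - conj ζ * z‖ + ‖z‖ * (1 - ‖ζ‖ ^ 2) := by
    refine (norm_sub_le _ _).trans (add_le_add (norm_add_le _ _) le_rfl) |>.trans_eq ?_
    simp only [norm_mul, norm_div, ← map_sub, Complex.norm_conj, Complex.norm_real,
      Real.norm_eq_abs, abs_of_nonneg hc]
  have hb : 0 < ‖1 - conj ζ * z‖ :=
    (sub_pos.2 hζ).trans_le (one_sub_norm_le_norm_one_sub_conj_mul ζ hz)
  have hab := norm_sub_le_norm_one_sub_conj_mul hz hζ.le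
  have hℓ := norm_sub_mul_mul_abs_log_le hz hζ.le
  set a := ‖z - ζ‖
  set b := ‖1 - conj ζ * z‖
  set ℓ := Real.log (‖(z - ζ) / (1 - conj ζ * z)‖ ^ 2)
  have hlog : a * |ℓ| ≤ (1 + ‖ζ‖) * (1 - ‖z‖ ^ 2) := by
    rw [← mul_le_mul_iff_of_pos_right hb]
    calc a * |ℓ| * b = a * b * |ℓ| := by ring
      _ ≤ (1 + ‖ζ‖) * (1 - ‖z‖ ^ 2) * (1 - ‖ζ‖) := by linarith
      _ ≤ (1 + ‖ζ‖) * (1 - ‖z‖ ^ 2) * b := by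
        have : 0 ≤ 1 - ‖z‖ ^ 2 := by nlinarith [norm_nonneg z]
        gcongr
        exact one_sub_norm_le_norm_one_sub_conj_mul ζ hz
  have hdiv : a * (1 - ‖ζ‖ ^ 2) / b ≤ 1 - ‖ζ‖ ^ 2 :=
    div_le_of_le_mul₀ hb.le hc (by rw [mul_comm]; gcongr)
  rw [GzMajorant]
  linarith

theorem integral_ball_comp_norm (g : ℝ → ℝ) {R : ℝ} (hR : 0 ≤ R) :
    ∫ z in ball (0 : ℂ) R, g ‖z‖ = 2 * Real.pi * ∫ y in (0 : ℝ)..R, y * g y := by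
  have hball : ball (0 : ℂ) R = norm ⁻¹' Iio R := by ext; simp
  have hind (y : ℝ) :
      y ^ (2 - 1) • (Iio R).indicator g y = (Iio R).indicator (fun y ↦ y * g y) y := by
    by_cases hy : y < R <;> simp [hy]
  rw [← integral_indicator measurableSet_ball, hball]
  simp_rw [show (fun z : ℂ ↦ g ‖z‖) = g ∘ norm from rfl, indicator_comp_right]
  rw [integral_fun_norm_addHaar volume, Complex.finrank_real_complex, measureReal_def,
    Complex.volume_ball]
  simp_rw [hind]
  rw [setIntegral_indicator measurableSet_Iio, Ioi_inter_Iio, intervalIntegral.integral_of_le hR,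
    integral_Ioc_eq_integral_Ioo]
  simp only [ENNReal.ofReal_one, one_pow, one_mul, ENNReal.coe_toReal, NNReal.coe_real_pi,
    smul_eq_mul, nsmul_eq_mul, Nat.cast_ofNat]
  ring

theorem lintegral_dA_comp_norm {g : ℝ → ℝ} (hg : Continuous g)
    (hg₀ : ∀ y ∈ Ico (0 : ℝ) 1, 0 ≤ g y) :
    ∫⁻ z, ENNReal.ofReal (g ‖z‖) ∂dA = ENNReal.ofReal (2 * ∫ y in (0 : ℝ)..1, y * g y) := by
  have hint : IntegrableOn (fun z : ℂ ↦ g ‖z‖) (ball 0 1) :=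
    ((hg.comp continuous_norm).continuousOn.integrableOn_compact (isCompact_closedBall 0 1)).mono_set
      ball_subset_closedBall
  have hnonneg : 0 ≤ᵐ[volume.restrict (ball (0 : ℂ) 1)] fun z ↦ g ‖z‖ :=
    ae_restrict_of_forall_mem measurableSet_ball fun z hz ↦
      hg₀ _ ⟨norm_nonneg z, mem_ball_zero_iff.mp hz⟩
  rw [dA, lintegral_smul_measure, ← ofReal_integral_eq_lintegral_ofReal hint hnonneg,
    integral_ball_comp_norm g zero_le_one, smul_eq_mul, ← ENNReal.ofReal_mul (by positivity)]
  congr 1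
  field_simp

theorem lintegral_dA_le_of_le_comp_norm {f : ℂ → ℝ} {g : ℝ → ℝ} (hg : Continuous g)
    (hg₀ : ∀ y ∈ Ico (0 : ℝ) 1, 0 ≤ g y) (hfg : ∀ z ∈ ball (0 : ℂ) 1, f z ≤ g ‖z‖) :
    ∫⁻ z, ENNReal.ofReal (f z) ∂dA ≤ ENNReal.ofReal (2 * ∫ y in (0 : ℝ)..1, y * g y) := by
  rw [← lintegral_dA_comp_norm hg hg₀, dA, lintegral_smul_measure, lintegral_smul_measure,
    smul_eq_mul, smul_eq_mul]
  exact mul_le_mul_right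
    (setLIntegral_mono (by fun_prop) fun z hz ↦ ENNReal.ofReal_le_ofReal (hfg z hz)) _

theorem integral_mul_one_sub_sq : ∫ y in (0 : ℝ)..1, y * (1 - y ^ 2) = 1 / 4 := by
  norm_num [mul_sub, ← pow_succ', integral_pow]

theorem integral_mul_GzMajorant (r : ℝ) :
    ∫ y in (0 : ℝ)..1, y * GzMajorant r y = (1 + r) / 4 + 5 * (1 - r ^ 2) / 6 := by
  have hpoly (y : ℝ) : y * GzMajorant r y
      = (2 + r - r ^ 2) * y + (1 - r ^ 2) * y ^ 2 - (1 + r) * y ^ 3 := by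
    unfold GzMajorant; ring
  simp only [hpoly]
  rw [intervalIntegral.integral_sub, intervalIntegral.integral_add,
    intervalIntegral.integral_const_mul, intervalIntegral.integral_const_mul,
    intervalIntegral.integral_const_mul]
  · simp only [integral_id, integral_pow]
    ring
  all_goals exact (by fun_prop : Continuous _).intervalIntegrable _ _

/-- For fixed `ζ ∈ 𝔻`, `∫_𝔻 |G(z,ζ)| dA(z) ≤ 3/4` and `∫_𝔻 |G_z(z,ζ)| dA(z) ≤ 5/2`;
in particular both integrals are finite. -/
theorem integral_abs_Gker_Gz_fst_le (ζ : ℂ) (hζ : ζ ∈ ball (0 : ℂ) 1) :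
    (∫⁻ z, ENNReal.ofReal |Gker z ζ| ∂dA) ≤ ENNReal.ofReal (3 / 4) ∧
    (∫⁻ z, ENNReal.ofReal (‖Gz z ζ‖) ∂dA) ≤ ENNReal.ofReal (5 / 2) := by
  have hζ1 : ‖ζ‖ < 1 := mem_ball_zero_iff.mp hζ
  have hz1 (z : ℂ) (hz : z ∈ ball (0 : ℂ) 1) : ‖z‖ ≤ 1 := (mem_ball_zero_iff.mp hz).le
  constructor
  · calc ∫⁻ z, ENNReal.ofReal |Gker z ζ| ∂dA
        ≤ ENNReal.ofReal (2 * ∫ y in (0 : ℝ)..1, y * (1 - y ^ 2)) :=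
          lintegral_dA_le_of_le_comp_norm (by fun_prop) (fun y hy ↦ by nlinarith [hy.1, hy.2])
            fun z hz ↦ abs_Gker_le (hz1 z hz) hζ1.le
      _ ≤ ENNReal.ofReal (3 / 4) :=
          ENNReal.ofReal_le_ofReal (by rw [integral_mul_one_sub_sq]; norm_num)
  · calc ∫⁻ z, ENNReal.ofReal ‖Gz z ζ‖ ∂dA
        ≤ ENNReal.ofReal (2 * ∫ y in (0 : ℝ)..1, y * GzMajorant ‖ζ‖ y) :=
          lintegral_dA_le_of_le_comp_norm (by unfold GzMajorant; fun_prop)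
            (fun y hy ↦ GzMajorant_nonneg ⟨by linarith [norm_nonneg ζ], hζ1.le⟩
              ⟨by linarith [hy.1], hy.2.le⟩)
            fun z hz ↦ norm_Gz_le (hz1 z hz) hζ1
      _ ≤ ENNReal.ofReal (5 / 2) :=
          ENNReal.ofReal_le_ofReal (by
            rw [integral_mul_GzMajorant]; nlinarith [sq_nonneg (‖ζ‖ - 3 / 20)])
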